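/- arXiv:1903.09040 — 9 statements merged into one kernel-verified Lean document; each statement's English description precedes it below -/
import Mathlib

section
/- (Structure of fundamental solutions, discrete part of Proposition 1.) Fix a positive integer N, a complex number z ≠ 0, and n₀ ∈ ℕ. Let F, U : ℕ → M_{2N}(ℂ) be such that F(n) ∈ 𝕄_d, U(n) ∈ 𝕄_d and F(n) is invertible for every n. If μ : ℕ → M_{2N}(ℂ) satisfies the discrete spectral problem F(n) μ(n+1) = Z μ(n) Z^{−1} + U(n) μ(n) Z^{−1} for all n ∈ ℕ, and μ(n₀) ∈ 𝕄_d, then μ(n) ∈ 𝕄_d for all n ≥ n₀. -/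
noncomputable section

open Matrix

/-- `𝕄_d`: the set of `2N×2N` complex matrices (rows/columns indexed by
`Fin 2 × Fin N`) all of whose four `N×N` blocks are diagonal matrices. -/
def MdSet (N : ℕ) : Set (Matrix (Fin 2 × Fin N) (Fin 2 × Fin N) ℂ) :=
  {M | ∀ (j k : Fin 2) (a b : Fin N), a ≠ b → M (j, a) (k, b) = 0}


lemma Md_diag (N : ℕ) (v : Fin 2 × Fin N → ℂ) : Matrix.diagonal v ∈ MdSet N := by
  intro j k a b hab
  exact Matrix.diagonal_apply_ne v (by simp [Prod.ext_iff, hab])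

lemma Md_add {N : ℕ} {M M' : Matrix (Fin 2 × Fin N) (Fin 2 × Fin N) ℂ}
    (h : M ∈ MdSet N) (h' : M' ∈ MdSet N) : M + M' ∈ MdSet N := by
  intro j k a b hab
  simp [h j k a b hab, h' j k a b hab]

lemma Md_mul {N : ℕ} {M M' : Matrix (Fin 2 × Fin N) (Fin 2 × Fin N) ℂ}
    (h : M ∈ MdSet N) (h' : M' ∈ MdSet N) : M * M' ∈ MdSet N := by
  intro j k a b hab
  rw [Matrix.mul_apply]
  apply Finset.sum_eq_zero
  intro x _
  rcases eq_or_ne x.2 b with hx | hx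
  · have : M (j, a) (x.1, x.2) = 0 := h j x.1 a x.2 (by rw [hx]; exact hab)
    simp [this]
  · have : M' (x.1, x.2) (k, b) = 0 := h' x.1 k x.2 b hx
    simp [this]

def Dmat (N : ℕ) (d : Fin N → ℂ) : Matrix (Fin 2 × Fin N) (Fin 2 × Fin N) ℂ :=
  Matrix.diagonal fun x => d x.2

lemma Md_commute {N : ℕ} {M : Matrix (Fin 2 × Fin N) (Fin 2 × Fin N) ℂ}
    (h : M ∈ MdSet N) (d : Fin N → ℂ) : M * Dmat N d = Dmat N d * M := by
  ext ⟨j, a⟩ ⟨k, b⟩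
  rw [Dmat, Matrix.mul_diagonal, Matrix.diagonal_mul]
  rcases eq_or_ne a b with hab | hab
  · rw [hab, mul_comm]
  · simp [h j k a b hab]

lemma Md_inv {N : ℕ} {M : Matrix (Fin 2 × Fin N) (Fin 2 × Fin N) ℂ}
    (h : M ∈ MdSet N) (hu : IsUnit M) : M⁻¹ ∈ MdSet N := by
  haveI := hu.invertible
  have key : ∀ d : Fin N → ℂ, M⁻¹ * Dmat N d = Dmat N d * M⁻¹ := by
    intro d
    have h1 : M * M⁻¹ = 1 := Matrix.mul_inv_of_invertible M
    have h2 : M⁻¹ * M = 1 := Matrix.inv_mul_of_invertible M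
    calc M⁻¹ * Dmat N d = M⁻¹ * Dmat N d * (M * M⁻¹) := by rw [h1, mul_one]
      _ = M⁻¹ * (Dmat N d * M) * M⁻¹ := by
          rw [← mul_assoc, mul_assoc M⁻¹ (Dmat N d) M]
      _ = M⁻¹ * M * Dmat N d * M⁻¹ := by
          rw [← Md_commute h d, ← mul_assoc]
      _ = Dmat N d * M⁻¹ := by rw [h2, one_mul]
  intro j k a b hab
  have := congrFun (congrFun (key (fun c => if c = a then 1 else 0)) (j, a)) (k, b)
  rw [Dmat, Matrix.mul_diagonal, Matrix.diagonal_mul] at this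
  simpa [hab, Ne.symm hab] using this.symm

/-- `Z = diag(z I_N, z⁻¹ I_N)`. -/
def Zmat (N : ℕ) (z : ℂ) : Matrix (Fin 2 × Fin N) (Fin 2 × Fin N) ℂ :=
  Matrix.diagonal fun x => if x.1 = 0 then z else z⁻¹

/-- Discrete part of Proposition 1: if the coefficients `F n`, `U n` of the discrete
spectral problem `F(n) μ(n+1) = Z μ(n) Z⁻¹ + U(n) μ(n) Z⁻¹` lie in `𝕄_d` (with `F n`
invertible) and `μ(n₀) ∈ 𝕄_d`, then `μ(n) ∈ 𝕄_d` for all `n ≥ n₀`. -/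
theorem stmt2 (N : ℕ) (hN : 0 < N) (z : ℂ) (hz : z ≠ 0) (n₀ : ℕ)
    (F U : ℕ → Matrix (Fin 2 × Fin N) (Fin 2 × Fin N) ℂ)
    (hF : ∀ n, F n ∈ MdSet N) (hU : ∀ n, U n ∈ MdSet N)
    (hFinv : ∀ n, IsUnit (F n))
    (μ : ℕ → Matrix (Fin 2 × Fin N) (Fin 2 × Fin N) ℂ)
    (hμ : ∀ n, F n * μ (n + 1) =
      Zmat N z * μ n * (Zmat N z)⁻¹ + U n * μ n * (Zmat N z)⁻¹)
    (hinit : μ n₀ ∈ MdSet N) :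
    ∀ n, n₀ ≤ n → μ n ∈ MdSet N := by
  have hZ : Zmat N z ∈ MdSet N := Md_diag N _
  have hZi : (Zmat N z)⁻¹ ∈ MdSet N := by
    rw [Zmat, Matrix.inv_diagonal]
    exact Md_diag N _
  intro n hn
  induction n, hn using Nat.le_induction with
  | base => exact hinit
  | succ n hn ih =>
    have hstep : μ (n + 1) = (F n)⁻¹ * (F n * μ (n + 1)) := by
      haveI := (hFinv n).invertible
      rw [Matrix.inv_mul_cancel_left_of_invertible]
    rw [hstep, hμ n]
    exact Md_mul (Md_inv (hF n) (hFinv n))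
      (Md_add (Md_mul (Md_mul hZ ih) hZi) (Md_mul (Md_mul (hU n) ih) hZi))

end
end

section
/- (Zero-curvature formulation of the Ablowitz–Ladik system.) Let q, p : ℤ × ℝ → ℂ be differentiable in t and satisfy the Ablowitz–Ladik system i ∂_t q_n + q_{n+1} − 2q_n + q_{n−1} − p_n q_n (q_{n+1} + q_{n−1}) = 0 and i ∂_t p_n − p_{n+1} + 2p_n − p_{n−1} + p_n q_n (p_{n+1} + p_{n−1}) = 0 for all n ∈ ℤ, t ∈ ℝ. Let f : ℤ × ℝ → ℂ be differentiable in t, nowhere zero, with f(n,t)² = 1 − q(n,t)p(n,t) for all n, t. Then for every z ∈ ℂ with z ≠ 0, every n ∈ ℤ and every t ∈ ℝ, the 2×2 matrices W(n,t,z) = f(n,t)^{−1}(𝒵 + 𝒰(n,t)) and T(n,t,z) = i ω(z) σ₃ + 𝒱(n,t,z) satisfy the zero-curvature equation ∂_t W(n,t,z) = T(n+1,t,z) W(n,t,z) − W(n,t,z) T(n,t,z). -/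
/-!
Differentiating `f² = 1 − qp` and eliminating `∂ₜq`, `∂ₜp` by the Ablowitz–Ladik equations gives
`2 f ∂ₜf = −∂ₜ(qp) = −i (1 − qp) (p (q₊ + q₋) − q (p₊ + p₋))`; since `1 − qp = f²` and `f ≠ 0`, the
logarithmic derivative `μ = ∂ₜf / f` is a polynomial in `q`, `p`. Hence
`∂ₜW = f⁻¹ (∂ₜ𝒰 − μ (𝒵 + 𝒰))`, and after factoring out `f⁻¹` the zero-curvature equation becomes the
identity `T(n+1)(𝒵 + 𝒰) − (𝒵 + 𝒰) T(n) = ∂ₜ𝒰 − μ (𝒵 + 𝒰)`, which is checked entrywise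
once `∂ₜq`, `∂ₜp` are eliminated, using `𝒵⁻¹ = diag(z⁻¹, z)`.
-/

noncomputable section

open Matrix

/-- `𝒵 = diag(z, z⁻¹)`. -/
def Zcal (z : ℂ) : Matrix (Fin 2) (Fin 2) ℂ := !![z, 0; 0, z⁻¹]

/-- `σ₃ = diag(1, −1)`. -/
def sigma3 : Matrix (Fin 2) (Fin 2) ℂ := !![1, 0; 0, -1]

/-- `ω(z) = (1/2)(z − z⁻¹)²`. -/
def omega (z : ℂ) : ℂ := (1 / 2 : ℂ) * (z - z⁻¹) ^ 2

/-- `𝒰(n,t) = [[0, q(n,t)],[p(n,t), 0]]`. -/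
def Ucal (q p : ℤ → ℝ → ℂ) (n : ℤ) (t : ℝ) : Matrix (Fin 2) (Fin 2) ℂ :=
  !![0, q n t; p n t, 0]

/-- `𝒱(n,t,z) = i (𝒰(n−1,t)𝒵 − 𝒰(n,t)𝒵⁻¹ − (1/2)(𝒰(n,t)𝒰(n−1,t) + 𝒰(n−1,t)𝒰(n,t))) σ₃`. -/
def Vcal (q p : ℤ → ℝ → ℂ) (n : ℤ) (t : ℝ) (z : ℂ) : Matrix (Fin 2) (Fin 2) ℂ :=
  Complex.I • ((Ucal q p (n - 1) t * Zcal z - Ucal q p n t * (Zcal z)⁻¹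
    - (1 / 2 : ℂ) • (Ucal q p n t * Ucal q p (n - 1) t
      + Ucal q p (n - 1) t * Ucal q p n t)) * sigma3)

/-- `W(n,t,z) = f(n,t)⁻¹ (𝒵 + 𝒰(n,t))`. -/
def Wmat (q p f : ℤ → ℝ → ℂ) (n : ℤ) (t : ℝ) (z : ℂ) : Matrix (Fin 2) (Fin 2) ℂ :=
  (f n t)⁻¹ • (Zcal z + Ucal q p n t)

/-- `T(n,t,z) = i ω(z) σ₃ + 𝒱(n,t,z)`. -/
def Tmat (q p : ℤ → ℝ → ℂ) (n : ℤ) (t : ℝ) (z : ℂ) : Matrix (Fin 2) (Fin 2) ℂ :=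
  (Complex.I * omega z) • sigma3 + Vcal q p n t z

open Complex

lemma Zcal_inv {z : ℂ} (hz : z ≠ 0) : (Zcal z)⁻¹ = Zcal z⁻¹ :=
  Matrix.inv_eq_right_inv <| by simp [Zcal, hz, Matrix.one_fin_two]

lemma HasDerivAt.two_mul_mul_eq_of_sq_eq {f g : ℝ → ℂ} {f' g' : ℂ} {t : ℝ}
    (hfg : ∀ s, f s ^ 2 = g s) (hf : HasDerivAt f f' t) (hg : HasDerivAt g g' t) :
    2 * f t * f' = g' := by
  have hsq : HasDerivAt g (2 * f t * f') t := by
    simpa [← funext hfg] using hf.fun_pow 2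
  exact hsq.unique hg

lemma HasDerivAt.inv_mul_of_eq_mul {f c : ℝ → ℂ} {c' μ : ℂ} {t : ℝ}
    (hc : HasDerivAt c c' t) (hf : HasDerivAt f (f t * μ) t) (hft : f t ≠ 0) :
    HasDerivAt (fun s => (f s)⁻¹ * c s) ((f t)⁻¹ * (c' - μ * c t)) t := by
  refine ((hf.fun_inv hft).fun_mul hc).congr_deriv ?_
  field_simp
  ring

/-- The logarithmic derivative `∂ₜ f / f` forced by `f² = 1 − qp` along a solution of the
Ablowitz–Ladik system. -/
def alLogDeriv (q p : ℤ → ℝ → ℂ) (n : ℤ) (t : ℝ) : ℂ :=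
  -(I / 2) * (p n t * (q (n + 1) t + q (n - 1) t) - q n t * (p (n + 1) t + p (n - 1) t))

section

variable {q p f : ℤ → ℝ → ℂ} {n : ℤ} {t : ℝ}

lemma hasDerivAt_mul_alLogDeriv_of_sq_eq_one_sub_mul (hq : DifferentiableAt ℝ (q n) t)
    (hp : DifferentiableAt ℝ (p n) t) (hf : DifferentiableAt ℝ (f n) t) (hfne : f n t ≠ 0)
    (hfsq : ∀ s, f n s ^ 2 = 1 - q n s * p n s)
    (hALq : I * deriv (q n) t + q (n + 1) t - 2 * q n t + q (n - 1) t
      - p n t * q n t * (q (n + 1) t + q (n - 1) t) = 0)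
    (hALp : I * deriv (p n) t - p (n + 1) t + 2 * p n t - p (n - 1) t
      + p n t * q n t * (p (n + 1) t + p (n - 1) t) = 0) :
    HasDerivAt (f n) (f n t * alLogDeriv q p n t) t := by
  have hsq : 2 * f n t * deriv (f n) t = -(deriv (q n) t * p n t + q n t * deriv (p n) t) :=
    hf.hasDerivAt.two_mul_mul_eq_of_sq_eq hfsq
      ((hq.hasDerivAt.mul hp.hasDerivAt).const_sub 1)
  have hderiv : deriv (f n) t = f n t * alLogDeriv q p n t := by
    refine mul_left_cancel₀ (mul_ne_zero two_ne_zero hfne) ?_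
    unfold alLogDeriv
    linear_combination hsq + (I * p n t) * hALq + (I * q n t) * hALp
      - (deriv (q n) t * p n t + q n t * deriv (p n) t) * I_sq
      + I * (p n t * (q (n + 1) t + q (n - 1) t) - q n t * (p (n + 1) t + p (n - 1) t))
        * hfsq t
  exact hderiv ▸ hf.hasDerivAt

lemma hasDerivAt_Zcal_add_Ucal_apply (z : ℂ) {dq dp : ℂ} (hq : HasDerivAt (q n) dq t)
    (hp : HasDerivAt (p n) dp t) (i j : Fin 2) :
    HasDerivAt (fun s => (Zcal z + Ucal q p n s) i j) (!![0, dq; dp, 0] i j) t := by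
  fin_cases i <;> fin_cases j <;> simp [Zcal, Ucal, hq, hp, hasDerivAt_const]

lemma hasDerivAt_Wmat_apply (z : ℂ) {dq dp μ : ℂ} (hq : HasDerivAt (q n) dq t)
    (hp : HasDerivAt (p n) dp t) (hf : HasDerivAt (f n) (f n t * μ) t) (hfne : f n t ≠ 0)
    (i j : Fin 2) :
    HasDerivAt (fun s => Wmat q p f n s z i j)
      (((f n t)⁻¹ • (!![0, dq; dp, 0] - μ • (Zcal z + Ucal q p n t))) i j) t :=
  (hasDerivAt_Zcal_add_Ucal_apply z hq hp i j).inv_mul_of_eq_mul hf hfne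

lemma Tmat_add_one_mul_sub_mul_Tmat {z : ℂ} (hz : z ≠ 0) {dq dp : ℂ}
    (hALq : I * dq + q (n + 1) t - 2 * q n t + q (n - 1) t
      - p n t * q n t * (q (n + 1) t + q (n - 1) t) = 0)
    (hALp : I * dp - p (n + 1) t + 2 * p n t - p (n - 1) t
      + p n t * q n t * (p (n + 1) t + p (n - 1) t) = 0) :
    Tmat q p (n + 1) t z * (Zcal z + Ucal q p n t) - (Zcal z + Ucal q p n t) * Tmat q p n t z
      = !![0, dq; dp, 0] - alLogDeriv q p n t • (Zcal z + Ucal q p n t) := by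
  obtain rfl : dq = I * (q (n + 1) t - 2 * q n t + q (n - 1) t
      - p n t * q n t * (q (n + 1) t + q (n - 1) t)) := by
    linear_combination -I * hALq + dq * I_sq
  obtain rfl : dp = I * (-p (n + 1) t + 2 * p n t - p (n - 1) t
      + p n t * q n t * (p (n + 1) t + p (n - 1) t)) := by
    linear_combination -I * hALp + dp * I_sq
  rw [Tmat, Tmat, Vcal, Vcal, Zcal_inv hz, add_sub_cancel_right]
  ext i j
  fin_cases i <;> fin_cases j <;>
    simp [Zcal, Ucal, sigma3, omega, alLogDeriv] <;> field_simp <;> ring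

end

/-- Zero-curvature formulation of the Ablowitz–Ladik system: if `(q,p)` solves the
AL system and `f² = 1 − qp` with `f` nowhere zero, then
`∂_t W(n,t,z) = T(n+1,t,z) W(n,t,z) − W(n,t,z) T(n,t,z)` (entrywise) for every
`z ≠ 0`, `n ∈ ℤ`, `t ∈ ℝ`. -/
theorem stmt5 (q p f : ℤ → ℝ → ℂ)
    (hq : ∀ n t, DifferentiableAt ℝ (q n) t)
    (hp : ∀ n t, DifferentiableAt ℝ (p n) t)
    (hf : ∀ n t, DifferentiableAt ℝ (f n) t)
    (hfne : ∀ n t, f n t ≠ 0)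
    (hfsq : ∀ n t, (f n t) ^ 2 = 1 - q n t * p n t)
    (hALq : ∀ (n : ℤ) (t : ℝ),
      Complex.I * deriv (q n) t + q (n + 1) t - 2 * q n t + q (n - 1) t
        - p n t * q n t * (q (n + 1) t + q (n - 1) t) = 0)
    (hALp : ∀ (n : ℤ) (t : ℝ),
      Complex.I * deriv (p n) t - p (n + 1) t + 2 * p n t - p (n - 1) t
        + p n t * q n t * (p (n + 1) t + p (n - 1) t) = 0) :
    ∀ (z : ℂ), z ≠ 0 → ∀ (n : ℤ) (t : ℝ) (i j : Fin 2),
      deriv (fun s => Wmat q p f n s z i j) t =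
        (Tmat q p (n + 1) t z * Wmat q p f n t z
          - Wmat q p f n t z * Tmat q p n t z) i j := by
  intro z hz n t i j
  have hfn := hasDerivAt_mul_alLogDeriv_of_sq_eq_one_sub_mul (hq n t) (hp n t) (hf n t)
    (hfne n t) (hfsq n) (hALq n t) (hALp n t)
  rw [(hasDerivAt_Wmat_apply z (hq n t).hasDerivAt (hp n t).hasDerivAt hfn (hfne n t) i j).deriv,
    ← Tmat_add_one_mul_sub_mul_Tmat hz (hALq n t) (hALp n t)]
  simp only [Wmat, Matrix.mul_smul, Matrix.smul_mul, smul_sub]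

end
end

section
/- (Reflection symmetry of solutions of the discrete spectral problem.) Let Q, P, 𝓕 : ℤ → M₂(ℂ) take diagonal-matrix values with 𝓕(n) invertible and 𝓕(n)² = I₂ − Q(n)P(n) for all n. Set F(n) = diag(𝓕(n), 𝓕(n)) and U(n) = [[0, Q(n)],[P(n), 0]] (4×4 block matrices), and assume the symmetries F(n−1) = Σ F(−n) Σ and U(n−1) = −Σ U(−n) Σ hold for all n ∈ ℤ. If μ : ℤ × (ℂ∖{0}) → M₄(ℂ) satisfies F(n) μ(n+1, z) = Z μ(n, z) Z^{−1} + U(n) μ(n, z) Z^{−1} for all n ∈ ℤ and all z ≠ 0, then the function ν(n, z) := Σ μ(−n, 1/z) Σ satisfies the same equation: F(n) ν(n+1, z) = Z ν(n, z) Z^{−1} + U(n) ν(n, z) Z^{−1} for all n ∈ ℤ and all z ≠ 0. -/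
noncomputable section

open Matrix

/-- `σ = [[0,1],[1,0]]`. -/
def sigmaM : Matrix (Fin 2) (Fin 2) ℂ := !![0, 1; 1, 0]

/-- `Σ = diag(σ, −σ)`. -/
def SigmaM : Matrix (Fin 2 ⊕ Fin 2) (Fin 2 ⊕ Fin 2) ℂ :=
  Matrix.fromBlocks sigmaM 0 0 (-sigmaM)

/-- `Z = diag(z I₂, z⁻¹ I₂)`. -/
def Z4 (z : ℂ) : Matrix (Fin 2 ⊕ Fin 2) (Fin 2 ⊕ Fin 2) ℂ :=
  Matrix.fromBlocks (z • 1) 0 0 (z⁻¹ • 1)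

/-- `F(n) = diag(𝓕(n), 𝓕(n))`. -/
def Fb (Fd : ℤ → Matrix (Fin 2) (Fin 2) ℂ) (n : ℤ) :
    Matrix (Fin 2 ⊕ Fin 2) (Fin 2 ⊕ Fin 2) ℂ :=
  Matrix.fromBlocks (Fd n) 0 0 (Fd n)

/-- `U(n) = [[0, Q(n)],[P(n), 0]]`. -/
def Ub (Q P : ℤ → Matrix (Fin 2) (Fin 2) ℂ) (n : ℤ) :
    Matrix (Fin 2 ⊕ Fin 2) (Fin 2 ⊕ Fin 2) ℂ :=
  Matrix.fromBlocks 0 (Q n) (P n) 0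

lemma diag_comm {A B : Matrix (Fin 2) (Fin 2) ℂ} (hA : A.IsDiag) (hB : B.IsDiag) :
    A * B = B * A := by
  rw [← hA.diagonal_diag, ← hB.diagonal_diag, diagonal_mul_diagonal, diagonal_mul_diagonal]
  exact congrArg Matrix.diagonal (funext fun i => mul_comm _ _)

lemma SS : SigmaM * SigmaM = 1 := by
  have h : sigmaM * sigmaM = 1 := by
    rw [sigmaM, Matrix.mul_fin_two, Matrix.one_fin_two]
    norm_num
  rw [SigmaM, Matrix.fromBlocks_multiply]
  simp [h, ← Matrix.fromBlocks_one]

lemma ZZ {z : ℂ} (hz : z ≠ 0) : Z4 z * Z4 z⁻¹ = 1 := by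
  rw [Z4, Z4, Matrix.fromBlocks_multiply]
  simp [smul_smul, mul_inv_cancel₀ hz, inv_mul_cancel₀ hz, inv_inv, ← Matrix.fromBlocks_one]

lemma Z4inv {z : ℂ} (hz : z ≠ 0) : (Z4 z)⁻¹ = Z4 z⁻¹ :=
  Matrix.inv_eq_right_inv (ZZ hz)

lemma SZcomm (w : ℂ) : SigmaM * Z4 w = Z4 w * SigmaM := by
  rw [SigmaM, Z4, Matrix.fromBlocks_multiply, Matrix.fromBlocks_multiply]
  simp [Matrix.mul_smul, Matrix.smul_mul]

lemma FZcomm (Fd : ℤ → Matrix (Fin 2) (Fin 2) ℂ) (m : ℤ) (w : ℂ) :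
    Fb Fd m * Z4 w = Z4 w * Fb Fd m := by
  rw [Fb, Z4, Matrix.fromBlocks_multiply, Matrix.fromBlocks_multiply]
  simp [Matrix.mul_smul, Matrix.smul_mul]

lemma FUcomm (Q P Fd : ℤ → Matrix (Fin 2) (Fin 2) ℂ)
    (hQ : ∀ n, (Q n).IsDiag) (hP : ∀ n, (P n).IsDiag) (hFd : ∀ n, (Fd n).IsDiag) (m : ℤ) :
    Fb Fd m * Ub Q P m = Ub Q P m * Fb Fd m := by
  rw [Fb, Ub, Matrix.fromBlocks_multiply, Matrix.fromBlocks_multiply]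
  simp [diag_comm (hFd m) (hQ m), diag_comm (hFd m) (hP m)]

lemma ZUcomm (Q P : ℤ → Matrix (Fin 2) (Fin 2) ℂ) (m : ℤ) (z : ℂ) :
    Z4 z * Ub Q P m = Ub Q P m * Z4 z⁻¹ := by
  rw [Ub, Z4, Z4, Matrix.fromBlocks_multiply, Matrix.fromBlocks_multiply]
  simp [Matrix.mul_smul, Matrix.smul_mul, inv_inv]

lemma FFUU (Q P Fd : ℤ → Matrix (Fin 2) (Fin 2) ℂ)
    (hQ : ∀ n, (Q n).IsDiag) (hP : ∀ n, (P n).IsDiag)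
    (hFsq : ∀ n, (Fd n) ^ 2 = 1 - Q n * P n) (m : ℤ) :
    Fb Fd m * Fb Fd m = 1 - Ub Q P m * Ub Q P m := by
  have key : Fb Fd m * Fb Fd m + Ub Q P m * Ub Q P m = 1 := by
    rw [Fb, Ub, Matrix.fromBlocks_multiply, Matrix.fromBlocks_multiply,
      Matrix.fromBlocks_add, ← Matrix.fromBlocks_one]
    have h := hFsq m
    rw [pow_two] at h
    simp [h, diag_comm (hP m) (hQ m)]
  linear_combination (norm := noncomm_ring) key

lemma ringid {R : Type*} [Ring R] (Zp Zm U A : R) (h1 : Zp * Zm = 1)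
    (h3 : Zp * U = U * Zm) :
    (Zp - U) * (Zm * A * Zp + U * A * Zp) * Zm = (1 - U * U) * A := by
  have e : (Zp - U) * (Zm * A * Zp + U * A * Zp) * Zm
      = (Zp * Zm) * (A * (Zp * Zm)) + (Zp * U) * (A * (Zp * Zm))
        - (U * Zm) * (A * (Zp * Zm)) - (U * U) * (A * (Zp * Zm)) := by
    noncomm_ring
  rw [e, h1, h3]
  noncomm_ring

lemma Fb_isUnit (Fd : ℤ → Matrix (Fin 2) (Fin 2) ℂ) (hFinv : ∀ n, IsUnit (Fd n)) (m : ℤ) :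
    IsUnit (Fb Fd m) := by
  obtain ⟨u, hu⟩ := hFinv m
  refine ⟨⟨Fb Fd m, Matrix.fromBlocks (↑u⁻¹) 0 0 (↑u⁻¹), ?_, ?_⟩, rfl⟩ <;>
  · show _ = (1 : Matrix (Fin 2 ⊕ Fin 2) (Fin 2 ⊕ Fin 2) ℂ)
    simp only [Fb]
    rw [Matrix.fromBlocks_multiply, ← hu]
    simp [← Matrix.fromBlocks_one,
      Matrix.mul_nonsing_inv _ ((Matrix.isUnit_iff_isUnit_det _).mp u.isUnit),
      Matrix.nonsing_inv_mul _ ((Matrix.isUnit_iff_isUnit_det _).mp u.isUnit)]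

/-- Reflection symmetry of solutions of the discrete spectral problem: if `μ` solves
`F(n) μ(n+1,z) = Z μ(n,z) Z⁻¹ + U(n) μ(n,z) Z⁻¹`, then so does
`ν(n,z) = Σ μ(−n, 1/z) Σ`. -/
theorem stmt9 (Q P Fd : ℤ → Matrix (Fin 2) (Fin 2) ℂ)
    (hQ : ∀ n, (Q n).IsDiag) (hP : ∀ n, (P n).IsDiag) (hFd : ∀ n, (Fd n).IsDiag)
    (hFinv : ∀ n, IsUnit (Fd n))
    (hFsq : ∀ n, (Fd n) ^ 2 = 1 - Q n * P n)
    (hFsym : ∀ n : ℤ, Fb Fd (n - 1) = SigmaM * Fb Fd (-n) * SigmaM)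
    (hUsym : ∀ n : ℤ, Ub Q P (n - 1) = -(SigmaM * Ub Q P (-n) * SigmaM))
    (μ : ℤ → ℂ → Matrix (Fin 2 ⊕ Fin 2) (Fin 2 ⊕ Fin 2) ℂ)
    (hμ : ∀ (n : ℤ) (z : ℂ), z ≠ 0 →
      Fb Fd n * μ (n + 1) z =
        Z4 z * μ n z * (Z4 z)⁻¹ + Ub Q P n * μ n z * (Z4 z)⁻¹) :
    ∀ (n : ℤ) (z : ℂ), z ≠ 0 →
      Fb Fd n * (SigmaM * μ (-(n + 1)) z⁻¹ * SigmaM) =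
        Z4 z * (SigmaM * μ (-n) z⁻¹ * SigmaM) * (Z4 z)⁻¹
          + Ub Q P n * (SigmaM * μ (-n) z⁻¹ * SigmaM) * (Z4 z)⁻¹ := by
  intro n z hz
  have hz' : z⁻¹ ≠ 0 := inv_ne_zero hz
  -- abbreviations
  set S := SigmaM with hS
  -- symmetry identities at index n
  have hFsym' : Fb Fd n = S * Fb Fd (-(n + 1)) * S := by
    have h := hFsym (n + 1)
    rwa [show n + 1 - 1 = n from by ring] at h
  have hUsym' : Ub Q P n = -(S * Ub Q P (-(n + 1)) * S) := by
    have h := hUsym (n + 1)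
    rwa [show n + 1 - 1 = n from by ring] at h
  -- the spectral equation at (-(n+1), z⁻¹)
  have hμ' : Fb Fd (-(n + 1)) * μ (-n) z⁻¹ =
      Z4 z⁻¹ * μ (-(n + 1)) z⁻¹ * Z4 z + Ub Q P (-(n + 1)) * μ (-(n + 1)) z⁻¹ * Z4 z := by
    have h := hμ (-(n + 1)) z⁻¹ hz'
    rwa [Z4inv hz', inv_inv, show -(n + 1) + 1 = -n from by ring] at h
  -- key identity (without Σ)
  have key : Fb Fd (-(n + 1)) * μ (-(n + 1)) z⁻¹ =
      Z4 z * μ (-n) z⁻¹ * Z4 z⁻¹ - Ub Q P (-(n + 1)) * μ (-n) z⁻¹ * Z4 z⁻¹ := by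
    refine (Fb_isUnit Fd hFinv (-(n + 1))).mul_left_cancel ?_
    have lhs : Fb Fd (-(n + 1)) * (Fb Fd (-(n + 1)) * μ (-(n + 1)) z⁻¹)
        = (1 - Ub Q P (-(n + 1)) * Ub Q P (-(n + 1))) * μ (-(n + 1)) z⁻¹ := by
      rw [← mul_assoc, FFUU Q P Fd hQ hP hFsq]
    have rhs : Fb Fd (-(n + 1)) *
        (Z4 z * μ (-n) z⁻¹ * Z4 z⁻¹ - Ub Q P (-(n + 1)) * μ (-n) z⁻¹ * Z4 z⁻¹)
        = (Z4 z - Ub Q P (-(n + 1))) * (Fb Fd (-(n + 1)) * μ (-n) z⁻¹) * Z4 z⁻¹ := by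
      have c1 := FZcomm Fd (-(n + 1)) z
      have c2 := FUcomm Q P Fd hQ hP hFd (-(n + 1))
      linear_combination (norm := noncomm_ring)
        c1 * (μ (-n) z⁻¹ * Z4 z⁻¹) - c2 * (μ (-n) z⁻¹ * Z4 z⁻¹)
    rw [lhs, rhs, hμ']
    exact (ringid (Z4 z) (Z4 z⁻¹) (Ub Q P (-(n + 1))) (μ (-(n + 1)) z⁻¹)
      (ZZ hz) (ZUcomm Q P (-(n + 1)) z)).symm
  -- assemble
  rw [hFsym', hUsym', Z4inv hz]
  have e1 : S * Fb Fd (-(n + 1)) * S * (S * μ (-(n + 1)) z⁻¹ * S)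
      = S * (Fb Fd (-(n + 1)) * μ (-(n + 1)) z⁻¹) * S := by
    rw [show S * Fb Fd (-(n + 1)) * S * (S * μ (-(n + 1)) z⁻¹ * S)
        = S * Fb Fd (-(n + 1)) * (S * S) * μ (-(n + 1)) z⁻¹ * S from by noncomm_ring,
      hS, SS]
    noncomm_ring
  have e2 : Z4 z * (S * μ (-n) z⁻¹ * S) * Z4 z⁻¹
      = S * (Z4 z * μ (-n) z⁻¹ * Z4 z⁻¹) * S := by
    rw [show Z4 z * (S * μ (-n) z⁻¹ * S) * Z4 z⁻¹
        = (Z4 z * S) * μ (-n) z⁻¹ * (S * Z4 z⁻¹) from by noncomm_ring,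
      hS, ← SZcomm z, SZcomm z⁻¹]
    noncomm_ring
  have e3 : -(S * Ub Q P (-(n + 1)) * S) * (S * μ (-n) z⁻¹ * S) * Z4 z⁻¹
      = S * (-(Ub Q P (-(n + 1)) * μ (-n) z⁻¹ * Z4 z⁻¹)) * S := by
    rw [show -(S * Ub Q P (-(n + 1)) * S) * (S * μ (-n) z⁻¹ * S) * Z4 z⁻¹
        = -(S * Ub Q P (-(n + 1)) * (S * S) * μ (-n) z⁻¹ * (S * Z4 z⁻¹)) from by noncomm_ring,
      hS, SS, SZcomm z⁻¹]
    noncomm_ring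
  rw [e1, e2, e3, key]
  noncomm_ring


end
end

section
/- (Key algebraic identity of Theorem 3: the jump functions reduce to the whole-line reflection coefficients.) Let a, b, ã, b̃, A, B, Ã, B̃, ã^i, b^i, b̃^i, a^i : ℂ∖{0} → M₂(ℂ) take diagonal-matrix values and set s(z) = [[ã(z), b(z)],[b̃(z), a(z)]], S(z) = [[Ã(z), B(z)],[B̃(z), A(z)]], s^{int}(z) = [[ã^i(z), b^i(z)],[b̃^i(z), a^i(z)]] (4×4 block matrices). Assume for all z ≠ 0: (i) a(z) ã(z) − b(z) b̃(z) = I₂; (ii) s(z) = Σ s(1/z) Σ s^{int}(z); (iii) S(z) = Σ S(1/z) Σ; (iv) the global relations A(z) b(z) = B(z) a(z) and Ã(z) b̃(z) = B̃(z) ã(z); (v) the matrices a(z), ã(z), A(z), Ã(z), a^i(z), ã^i(z), d(z) := ã(z)A(z) − b̃(z)B(z) and d̃(z) := a(z)Ã(z) − b(z)B̃(z) are invertible. Then for all z ≠ 0: b̃(z) a(z)^{−1} − B̃(z) a(z)^{−1} d̃(z)^{−1} = b̃^i(z) (a^i(z))^{−1} and b(z) ã(z)^{−1} − B(z) ã(z)^{−1}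 d(z)^{−1} = b^i(z) (ã^i(z))^{−1}. -/
/-!
All blocks are diagonal, so everything can be checked in the commutative ring `Fin 2 → ℂ` of
their diagonals. Conjugation by `Σ` sends `s(1/z)` to `[[σãσ, -σbσ], [-σb̃σ, σaσ]](1/z)`, so (ii)
writes the blocks of `s(z)` bilinearly in those of `σ s(1/z) σ` and `s^{int}(z)`, while (iii)
turns the global relations at `1/z` into `A(z) σb(1/z)σ + B(z) σa(1/z)σ = 0` and its tilde
version. Taking determinants in (ii) gives `a^i ã^i - b^i b̃^i = 1`; once the denominators `a`,
`a^i` and `d̃` are cleared, the identity is polynomial in the blocks.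
-/

noncomputable section

open Matrix

open scoped Ring

theorem jump_eq_reflection_coeff {R : Type*} [CommRing R]
    {a b ta tb tA tB ai bi tai tbi a' b' ta' tb' : R}
    (hdet : a * ta - b * tb = 1) (hdet' : a' * ta' - b' * tb' = 1)
    (hta : ta = ta' * tai - b' * tbi) (hb : b = ta' * bi - b' * ai)
    (htb : tb = a' * tbi - tb' * tai) (ha : a = a' * ai - tb' * bi)
    (hgr : tA * tb' + tB * ta' = 0)
    (ua : IsUnit a) (uai : IsUnit ai) (ud : IsUnit (a * tA - b * tB)) :
    tb * a⁻¹ʳ - tB * a⁻¹ʳ * (a * tA - b * tB)⁻¹ʳ = tbi * ai⁻¹ʳ := by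
  have hdet_int : ai * tai - bi * tbi = 1 := by
    rw [hta, hb, htb, ha] at hdet
    linear_combination hdet - (ai * tai - bi * tbi) * hdet'
  -- lower right block of `s^{int} = (Σ s(1/z) Σ)⁻¹ s(z)`
  have hai : ai = ta' * a + tb' * b := by
    rw [hb, ha]
    linear_combination -ai * hdet'
  have htb_ai : tb * ai - a * tbi = -tb' := by
    rw [htb, ha]
    linear_combination -tb' * hdet_int
  set d := a * tA - b * tB
  have key : (tb * d - tB) * ai = tbi * a * d := by
    linear_combination d * htb_ai - a * hgr - tB * hai
  linear_combination a⁻¹ʳ * d⁻¹ʳ * ai⁻¹ʳ * key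
    + (tbi * ai⁻¹ʳ * a * a⁻¹ʳ - tb * a⁻¹ʳ) * Ring.mul_inverse_cancel d ud
    + (tB * a⁻¹ʳ * d⁻¹ʳ - tb * a⁻¹ʳ * d * d⁻¹ʳ) * Ring.mul_inverse_cancel ai uai
    + tbi * ai⁻¹ʳ * Ring.mul_inverse_cancel a ua

instance Matrix.canLiftDiagonalRingHom {n α : Type*} [Fintype n] [DecidableEq n]
    [NonAssocSemiring α] : CanLift (Matrix n n α) (n → α) (diagonalRingHom n α) IsDiag :=
  ⟨fun _ h => ⟨_, h.diagonal_diag⟩⟩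

theorem jump_eq_reflection_coeff_of_isDiag {n R : Type*} [Fintype n] [DecidableEq n]
    [CommRing R] {a b ta tb A B tA tB ai bi tai tbi a' b' ta' tb' : Matrix n n R}
    (da : a.IsDiag) (db : b.IsDiag) (dta : ta.IsDiag) (dtb : tb.IsDiag)
    (dA : A.IsDiag) (dB : B.IsDiag) (dtA : tA.IsDiag) (dtB : tB.IsDiag)
    (dai : ai.IsDiag) (dbi : bi.IsDiag) (dtai : tai.IsDiag) (dtbi : tbi.IsDiag)
    (da' : a'.IsDiag) (db' : b'.IsDiag) (dta' : ta'.IsDiag) (dtb' : tb'.IsDiag)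
    (hdet : a * ta - b * tb = 1) (hdet' : a' * ta' - b' * tb' = 1)
    (hta : ta = ta' * tai - b' * tbi) (hb : b = ta' * bi - b' * ai)
    (htb : tb = a' * tbi - tb' * tai) (ha : a = a' * ai - tb' * bi)
    (hgr : A * b' + B * a' = 0) (hgr' : tA * tb' + tB * ta' = 0)
    (ua : IsUnit a) (uta : IsUnit ta) (uai : IsUnit ai) (utai : IsUnit tai)
    (ud : IsUnit (ta * A - tb * B)) (utd : IsUnit (a * tA - b * tB)) :
    tb * a⁻¹ - tB * a⁻¹ * (a * tA - b * tB)⁻¹ = tbi * ai⁻¹ ∧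
      b * ta⁻¹ - B * ta⁻¹ * (ta * A - tb * B)⁻¹ = bi * tai⁻¹ := by
  lift a to n → R using da
  lift b to n → R using db
  lift ta to n → R using dta
  lift tb to n → R using dtb
  lift A to n → R using dA
  lift B to n → R using dB
  lift tA to n → R using dtA
  lift tB to n → R using dtB
  lift ai to n → R using dai
  lift bi to n → R using dbi
  lift tai to n → R using dtai
  lift tbi to n → R using dtbi
  lift a' to n → R using da'
  lift b' to n → R using db'
  lift ta' to n → R using dta'
  lift tb' to n → R using dtb'
  have hinj : Function.Injective (diagonalRingHom n R) := diagonal_injective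
  have hinv (v : n → R) : (diagonalRingHom n R v)⁻¹ = diagonalRingHom n R v⁻¹ʳ := inv_diagonal v
  have hunit (v : n → R) : IsUnit (diagonalRingHom n R v) ↔ IsUnit v := isUnit_diagonal
  simp only [hinv, hunit, ← map_mul, ← map_sub, ← map_add, ← map_one (diagonalRingHom n R),
    ← map_zero (diagonalRingHom n R), hinj.eq_iff]
    at hdet hdet' hta hb htb ha hgr hgr' ua uta uai utai ud utd ⊢
  -- the second identity is the first one for the data with `a ↔ ã`, `b ↔ b̃`, `A ↔ Ã`, `B ↔ B̃`
  exact ⟨jump_eq_reflection_coeff hdet hdet' hta hb htb ha hgr' ua uai utd,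
    jump_eq_reflection_coeff (by linear_combination hdet) (by linear_combination hdet')
      ha htb hb hta hgr uta utai ud⟩

def sigmaConj : Matrix (Fin 2) (Fin 2) ℂ ≃ₐ[ℂ] Matrix (Fin 2) (Fin 2) ℂ :=
  reindexAlgEquiv ℂ ℂ (Equiv.swap 0 1)

theorem sigmaM_mul_mul_sigmaM (X : Matrix (Fin 2) (Fin 2) ℂ) :
    sigmaM * X * sigmaM = sigmaConj X := by
  ext i j
  fin_cases i <;> fin_cases j <;>
    simp [sigmaM, sigmaConj, mul_apply, vecMul, dotProduct, Fin.sum_univ_two]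

theorem Matrix.IsDiag.sigmaConj {X : Matrix (Fin 2) (Fin 2) ℂ} (hX : X.IsDiag) :
    (sigmaConj X).IsDiag :=
  hX.submatrix (Equiv.injective _)

theorem SigmaM_mul_fromBlocks_mul_SigmaM (P Q R S : Matrix (Fin 2) (Fin 2) ℂ) :
    SigmaM * fromBlocks P Q R S * SigmaM =
      fromBlocks (sigmaConj P) (-sigmaConj Q) (-sigmaConj R) (sigmaConj S) := by
  simp [SigmaM, fromBlocks_multiply, ← sigmaM_mul_mul_sigmaM, Matrix.mul_assoc]

/-- Key algebraic identity of Theorem 3: under the symmetries and global relations,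
the jump functions `γ̃ − Γ` and `γ − Γ̃` reduce to the whole-line reflection
coefficients `b̃^{int}(a^{int})⁻¹` and `b^{int}(ã^{int})⁻¹`. -/
theorem stmt11
    (a b ta tb A B tA tB ai bi tai tbi : ℂ → Matrix (Fin 2) (Fin 2) ℂ)
    (hdiag : ∀ z : ℂ, z ≠ 0 →
      (a z).IsDiag ∧ (b z).IsDiag ∧ (ta z).IsDiag ∧ (tb z).IsDiag ∧
      (A z).IsDiag ∧ (B z).IsDiag ∧ (tA z).IsDiag ∧ (tB z).IsDiag ∧
      (ai z).IsDiag ∧ (bi z).IsDiag ∧ (tai z).IsDiag ∧ (tbi z).IsDiag)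
    -- (i) the determinant relation
    (hdet : ∀ z : ℂ, z ≠ 0 → a z * ta z - b z * tb z = 1)
    -- (ii) s(z) = Σ s(1/z) Σ s^{int}(z)
    (hs : ∀ z : ℂ, z ≠ 0 →
      Matrix.fromBlocks (ta z) (b z) (tb z) (a z) =
        SigmaM * Matrix.fromBlocks (ta z⁻¹) (b z⁻¹) (tb z⁻¹) (a z⁻¹) * SigmaM
          * Matrix.fromBlocks (tai z) (bi z) (tbi z) (ai z))
    -- (iii) S(z) = Σ S(1/z) Σ
    (hS : ∀ z : ℂ, z ≠ 0 →
      Matrix.fromBlocks (tA z) (B z) (tB z) (A z) =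
        SigmaM * Matrix.fromBlocks (tA z⁻¹) (B z⁻¹) (tB z⁻¹) (A z⁻¹) * SigmaM)
    -- (iv) the global relations
    (hgr1 : ∀ z : ℂ, z ≠ 0 → A z * b z = B z * a z)
    (hgr2 : ∀ z : ℂ, z ≠ 0 → tA z * tb z = tB z * ta z)
    -- (v) invertibility
    (hunit : ∀ z : ℂ, z ≠ 0 →
      IsUnit (a z) ∧ IsUnit (ta z) ∧ IsUnit (A z) ∧ IsUnit (tA z) ∧
      IsUnit (ai z) ∧ IsUnit (tai z) ∧
      IsUnit (ta z * A z - tb z * B z) ∧ IsUnit (a z * tA z - b z * tB z)) :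
    ∀ z : ℂ, z ≠ 0 →
      (tb z * (a z)⁻¹ - tB z * (a z)⁻¹ * (a z * tA z - b z * tB z)⁻¹ =
        tbi z * (ai z)⁻¹) ∧
      (b z * (ta z)⁻¹ - B z * (ta z)⁻¹ * (ta z * A z - tb z * B z)⁻¹ =
        bi z * (tai z)⁻¹) := by
  intro z hz
  have hz' : z⁻¹ ≠ 0 := inv_ne_zero hz
  obtain ⟨da, db, dta, dtb, dA, dB, dtA, dtB, dai, dbi, dtai, dtbi⟩ := hdiag z hz
  obtain ⟨da', db', dta', dtb', -⟩ := hdiag z⁻¹ hz'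
  obtain ⟨ua, uta, -, -, uai, utai, ud, utd⟩ := hunit z hz
  have hsz := hs z hz
  rw [SigmaM_mul_fromBlocks_mul_SigmaM, fromBlocks_multiply, fromBlocks_inj] at hsz
  simp only [neg_mul, ← sub_eq_add_neg, neg_add_eq_sub] at hsz
  obtain ⟨hta, hb, htb, ha⟩ := hsz
  have hSz := hS z hz
  rw [SigmaM_mul_fromBlocks_mul_SigmaM, fromBlocks_inj] at hSz
  obtain ⟨htA, hB, htB, hA⟩ := hSz
  have hdet' := congrArg sigmaConj (hdet z⁻¹ hz')
  rw [map_sub, map_mul, map_mul, map_one] at hdet'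
  refine jump_eq_reflection_coeff_of_isDiag da db dta dtb dA dB dtA dtB dai dbi dtai dtbi
    da'.sigmaConj db'.sigmaConj dta'.sigmaConj dtb'.sigmaConj (hdet z hz) hdet'
    hta hb htb ha ?_ ?_ ua uta uai utai ud utd
  · rw [hA, hB, neg_mul, ← sub_eq_add_neg, sub_eq_zero, ← map_mul, ← map_mul, hgr1 z⁻¹ hz']
  · rw [htA, htB, neg_mul, ← sub_eq_add_neg, sub_eq_zero, ← map_mul, ← map_mul, hgr2 z⁻¹ hz']

end
end

section
/- (Proposition 3, first part: IDNLS as a local reduction.) Let ν ∈ {1, −1} and let q : ℤ × ℝ → ℂ be differentiable in t. For n ∈ ℤ set Q_n(t) = diag(q(n,t), q(−n−1,t)) (a 2×2 diagonal matrix). Then the matrix equation i ∂_t Q_n + Q_{n+1} − 2Q_n + Q_{n−1} − ν Q_n† Q_n (Q_{n+1} + Q_{n−1}) = 0 holds for all integers n ≥ 0 and all t ∈ ℝ, if and only if q satisfies the integrable discrete NLS equation i ∂_t q_n + q_{n+1} − 2q_n + q_{n−1} − ν |q_n|² (q_{n+1} + q_{n−1}) = 0 for all n ∈ ℤ and all t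 ∈ ℝ. -/
noncomputable section

open Matrix

/-- `Q_n(t) = diag(q(n,t), q(−n−1,t))`. -/
def Qfold (q : ℤ → ℝ → ℂ) (n : ℤ) (t : ℝ) : Matrix (Fin 2) (Fin 2) ℂ :=
  !![q n t, 0; 0, q (-n - 1) t]

/-- The entrywise `t`-derivative `∂_t Q_n(t)`. -/
def QfoldDeriv (q : ℤ → ℝ → ℂ) (n : ℤ) (t : ℝ) : Matrix (Fin 2) (Fin 2) ℂ :=
  !![deriv (q n) t, 0; 0, deriv (q (-n - 1)) t]

/-- Proposition 3, first part: the matrix equation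
`i ∂_t Q_n + Q_{n+1} − 2Q_n + Q_{n−1} − ν Q_n† Q_n (Q_{n+1} + Q_{n−1}) = 0` for all
`n ≥ 0` is equivalent to the integrable discrete NLS equation
`i ∂_t q_n + q_{n+1} − 2q_n + q_{n−1} − ν |q_n|² (q_{n+1} + q_{n−1}) = 0` on ℤ. -/
theorem stmt12 (ν : ℂ) (hν : ν = 1 ∨ ν = -1) (q : ℤ → ℝ → ℂ)
    (hq : ∀ n t, DifferentiableAt ℝ (q n) t) :
    (∀ n : ℤ, 0 ≤ n → ∀ t : ℝ,
      Complex.I • QfoldDeriv q n t + Qfold q (n + 1) t - (2 : ℂ) • Qfold q n t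
        + Qfold q (n - 1) t
        - ν • ((Qfold q n t)ᴴ * Qfold q n t * (Qfold q (n + 1) t + Qfold q (n - 1) t))
        = 0)
    ↔
    (∀ (n : ℤ) (t : ℝ),
      Complex.I * deriv (q n) t + q (n + 1) t - 2 * q n t + q (n - 1) t
        - ν * (q n t * (starRingEnd ℂ) (q n t)) * (q (n + 1) t + q (n - 1) t)
        = 0) := by
  constructor
  · intro h m t
    rcases le_or_gt 0 m with hm | hm
    · have H := congrFun (congrFun (h m hm t) 0) 0
      simp [Qfold, QfoldDeriv, Matrix.mul_apply, Fin.sum_univ_two,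
        Matrix.conjTranspose_apply] at H
      linear_combination H
    · have hn : (0:ℤ) ≤ -m - 1 := by linarith
      have H := congrFun (congrFun (h (-m - 1) hn t) 1) 1
      have e1 : -(-m - 1) - 1 = m := by ring
      have e2 : -(-m - 1 + 1) - 1 = m - 1 := by ring
      have e3 : -(-m - 1 - 1) - 1 = m + 1 := by ring
      simp [Qfold, QfoldDeriv, Matrix.mul_apply, Fin.sum_univ_two,
        Matrix.conjTranspose_apply, e1, e2, e3] at H
      rw [show (1 + m : ℤ) = m + 1 by ring] at H
      linear_combination H
  · intro h n hn t
    ext i j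
    fin_cases i <;> fin_cases j <;>
      simp [Qfold, QfoldDeriv, Matrix.mul_apply, Fin.sum_univ_two,
        Matrix.conjTranspose_apply]
    · linear_combination h n t
    · have H := h (-n - 1) t
      rw [show (-n - 1 + 1 : ℤ) = -n by ring] at H
      rw [show (-1 + -n - 1 : ℤ) = -n - 1 - 1 by ring]
      linear_combination H


end
end

section
/- (Proposition 3, second part: nonlocal IDNLS as a local reduction.) Let ν ∈ {1, −1} and let q : ℤ × ℝ → ℂ be differentiable in t. For n ∈ ℤ set Q_n(t) = diag(q(n,t), q(−n−1,t)) (a 2×2 diagonal matrix) and let σ = [[0,1],[1,0]]. Then the matrix equation i ∂_t Q_n + Q_{n+1} − 2Q_n + Q_{n−1} − ν (σ Q_n† σ) Q_n (Q_{n+1} + Q_{n−1}) = 0 holds for all integers n ≥ 0 and all t ∈ ℝ, if and only if q satisfies the nonlocal integrable discrete NLS equation i ∂_t q_n + q_{n+1} − 2q_n + q_{n−1} − ν q(n,t) · conj(q(−n−1,t)) · (q_{n+1} + q_{n−1}) = 0 for all n ∈ ℤ and all t ∈ ℝ. -/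
noncomputable section

open Matrix

/-- Proposition 3, second part: the matrix equation
`i ∂_t Q_n + Q_{n+1} − 2Q_n + Q_{n−1} − ν (σ Q_n† σ) Q_n (Q_{n+1} + Q_{n−1}) = 0`
for all `n ≥ 0` is equivalent to the nonlocal integrable discrete NLS equation
`i ∂_t q_n + q_{n+1} − 2q_n + q_{n−1} − ν q_n q*_{−n−1} (q_{n+1} + q_{n−1}) = 0` on ℤ. -/
theorem stmt13 (ν : ℂ) (hν : ν = 1 ∨ ν = -1) (q : ℤ → ℝ → ℂ)
    (hq : ∀ n t, DifferentiableAt ℝ (q n) t) :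
    (∀ n : ℤ, 0 ≤ n → ∀ t : ℝ,
      Complex.I • QfoldDeriv q n t + Qfold q (n + 1) t - (2 : ℂ) • Qfold q n t
        + Qfold q (n - 1) t
        - ν • ((sigmaM * (Qfold q n t)ᴴ * sigmaM) * Qfold q n t
          * (Qfold q (n + 1) t + Qfold q (n - 1) t))
        = 0)
    ↔
    (∀ (n : ℤ) (t : ℝ),
      Complex.I * deriv (q n) t + q (n + 1) t - 2 * q n t + q (n - 1) t
        - ν * (q n t * (starRingEnd ℂ) (q (-n - 1) t)) * (q (n + 1) t + q (n - 1) t)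
        = 0) := by
  constructor
  · intro h n t
    rcases le_or_gt 0 n with hn | hn
    · have h0 := congrFun (congrFun (h n hn t) 0) 0
      simp [Qfold, QfoldDeriv, sigmaM, Matrix.mul_apply, Matrix.vecMul, dotProduct, Matrix.conjTranspose_apply, Fin.sum_univ_two] at h0
      linear_combination h0
    · have hm : (0:ℤ) ≤ -n - 1 := by omega
      have h1 := congrFun (congrFun (h (-n - 1) hm t) 1) 1
      simp [Qfold, QfoldDeriv, sigmaM, Matrix.mul_apply, Matrix.vecMul, dotProduct, Matrix.conjTranspose_apply, Fin.sum_univ_two] at h1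
      ring_nf at h1 ⊢
      linear_combination h1
  · intro h n hn t
    ext i j
    fin_cases i <;> fin_cases j <;>
      simp [Qfold, QfoldDeriv, sigmaM, Matrix.mul_apply, Matrix.vecMul, dotProduct, Matrix.conjTranspose_apply, Fin.sum_univ_two]
    · linear_combination h n t
    · have h2 := h (-n - 1) t
      ring_nf at h2 ⊢
      linear_combination h2

end
end

section
/- (General nonlocal reduction of the Ablowitz–Ladik system.) Let ν ∈ {1, −1}, let n₀ ∈ ℤ, and let q : ℤ × ℝ → ℂ be differentiable in t. Define p(n,t) = ν · conj(q(−n−n₀, t)). Then the pair (q,p) satisfies the Ablowitz–Ladik system i ∂_t q_n + q_{n+1} − 2q_n + q_{n−1} − p_n q_n (q_{n+1} + q_{n−1}) = 0 and i ∂_t p_n − p_{n+1} + 2p_n − p_{n−1} + p_n q_n (p_{n+1} + p_{n−1}) = 0 for all n ∈ ℤ and t ∈ ℝ, if and only if q satisfies the general nonlocal integrable discrete NLS equation i ∂_t q_n + q_{n+1} − 2q_n + q_{n−1} − ν q(n,t) · conj(q(−n−n₀,t)) · (q_{n+1} + q_{n−1}) = 0 for all n ∈ ℤ and t ∈ ℝ.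 -/
noncomputable section

/-- General nonlocal reduction of the Ablowitz–Ladik system: with
`p(n,t) = ν conj(q(−n−n₀,t))`, the pair `(q,p)` satisfies the Ablowitz–Ladik system
iff `q` satisfies the general nonlocal integrable discrete NLS equation. -/
theorem stmt14 (ν : ℂ) (hν : ν = 1 ∨ ν = -1) (n₀ : ℤ) (q : ℤ → ℝ → ℂ)
    (hq : ∀ n t, DifferentiableAt ℝ (q n) t)
    (p : ℤ → ℝ → ℂ)
    (hp : ∀ (n : ℤ) (t : ℝ), p n t = ν * (starRingEnd ℂ) (q (-n - n₀) t)) :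
    ((∀ (n : ℤ) (t : ℝ),
        Complex.I * deriv (q n) t + q (n + 1) t - 2 * q n t + q (n - 1) t
          - p n t * q n t * (q (n + 1) t + q (n - 1) t) = 0) ∧
      (∀ (n : ℤ) (t : ℝ),
        Complex.I * deriv (p n) t - p (n + 1) t + 2 * p n t - p (n - 1) t
          + p n t * q n t * (p (n + 1) t + p (n - 1) t) = 0))
    ↔
    (∀ (n : ℤ) (t : ℝ),
      Complex.I * deriv (q n) t + q (n + 1) t - 2 * q n t + q (n - 1) t
        - ν * q n t * (starRingEnd ℂ) (q (-n - n₀) t) * (q (n + 1) t + q (n - 1) t)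
        = 0) := by
  have hν2 : ν * ν = 1 := by rcases hν with h | h <;> simp [h]
  have hνc : (starRingEnd ℂ) ν = ν := by rcases hν with h | h <;> simp [h]
  have hd : ∀ (n : ℤ) (t : ℝ),
      deriv (p n) t = ν * (starRingEnd ℂ) (deriv (q (-n - n₀)) t) := by
    intro n t
    have hfun : p n = fun s => ν * star (q (-n - n₀) s) := funext (hp n)
    rw [hfun, deriv_const_mul _ ((hq (-n - n₀) t).star), deriv.star]
    rfl
  constructor
  · rintro ⟨h1, _⟩ n t
    have h := h1 n t
    rw [hp] at h
    linear_combination h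
  · intro h
    constructor
    · intro n t
      rw [hp]
      linear_combination h n t
    · intro n t
      have hc := congrArg (starRingEnd ℂ) (h (-n - n₀) t)
      have hm : -(-n - n₀) - n₀ = n := by ring
      rw [hm] at hc
      simp only [map_add, map_sub, map_mul, map_ofNat, Complex.conj_conj, Complex.conj_I,
        map_zero, hνc] at hc
      rw [hd n t, hp n t, hp (n+1) t, hp (n-1) t]
      have e1 : -(n+1) - n₀ = -n - n₀ - 1 := by ring
      have e2 : -(n-1) - n₀ = -n - n₀ + 1 := by ring
      rw [e1, e2]
      linear_combination (-ν) * hc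


end
end

section
/- (Step of Lemma 3: the inverse of a Lax-pair solution solves the adjoint Lax equations.) Fix a positive integer N. Let Q, P, 𝓕 : ℤ × ℝ → M_N(ℂ) take diagonal-matrix values, with 𝓕(n,t) invertible and 𝓕(n,t)² = I_N − Q(n,t)P(n,t) for all n, t. Set F(n,t) = diag(𝓕(n,t), 𝓕(n,t)) and U(n,t) = [[0, Q(n,t)],[P(n,t), 0]] (2N×2N block matrices), and let V(n,t,z) = i ( U(n−1,t) Z − U(n,t) Z^{−1} − (1/2)(U(n,t)U(n−1,t) + U(n−1,t)U(n,t)) ) Σ₃. Suppose μ : ℤ × ℝ × (ℂ∖{0}) → M_{2N}(ℂ) is invertible for all (n,t,z), differentiable in t, and satisfies F(n,t) μ(n+1,t,z) = Z μ(n,t,z) Z^{−1} + U(n,t) μ(n,t,z) Z^{−1} and ∂_t μ(n,t,z) = i ω(z)(Σ₃ μ − μ Σ₃) + V(n,t,z) μ(n,t,z). Then Φ := μ^{−1} satisfies Φ(n+1,t,z) F(n,t) = Z Φ(n,t,z) Z^{−1} − Z Φ(n,t,z) U(n,t) and ∂_t Φ(n,t,z) = i ω(z)(Σ₃ Φ −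 Φ Σ₃) − Φ(n,t,z) V(n,t,z), for all n, t and z ≠ 0. -/
/-!
Write `L = Z + U` and `L' = Z⁻¹ - U`. Since `Z` is scalar on each block and `U` is
off-diagonal, `L * L' = diag(1 - Q P, 1 - P Q)`, which is `F²` because the diagonal `Q`, `P`
commute. Multiplying the spatial equation `F μ(n+1) = L μ(n) Z⁻¹` on the right by `Z μ(n)⁻¹ L'`
gives `F μ(n+1) Z μ(n)⁻¹ L' = F²`, and cancelling `F` yields `μ(n+1)⁻¹ F = Z μ(n)⁻¹ L'`.
The time equation follows from `(μ⁻¹)' = -μ⁻¹ μ' μ⁻¹`, the derivative of inversion in a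
normed algebra.
-/

noncomputable section

open Matrix

variable {N : ℕ}

/-- `Z = diag(z I_N, z⁻¹ I_N)`. -/
def Zb (N : ℕ) (z : ℂ) : Matrix (Fin N ⊕ Fin N) (Fin N ⊕ Fin N) ℂ :=
  Matrix.fromBlocks (z • 1) 0 0 (z⁻¹ • 1)

/-- `Σ₃ = diag(I_N, −I_N)`. -/
def Sigma3b (N : ℕ) : Matrix (Fin N ⊕ Fin N) (Fin N ⊕ Fin N) ℂ :=
  Matrix.fromBlocks 1 0 0 (-1)

/-- `F(n,t) = diag(𝓕(n,t), 𝓕(n,t))`. -/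
def Fblk (Fd : ℤ → ℝ → Matrix (Fin N) (Fin N) ℂ) (n : ℤ) (t : ℝ) :
    Matrix (Fin N ⊕ Fin N) (Fin N ⊕ Fin N) ℂ :=
  Matrix.fromBlocks (Fd n t) 0 0 (Fd n t)

/-- `U(n,t) = [[0, Q(n,t)],[P(n,t), 0]]`. -/
def Ublk (Q P : ℤ → ℝ → Matrix (Fin N) (Fin N) ℂ) (n : ℤ) (t : ℝ) :
    Matrix (Fin N ⊕ Fin N) (Fin N ⊕ Fin N) ℂ :=
  Matrix.fromBlocks 0 (Q n t) (P n t) 0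

/-- `V(n,t,z) = i (U(n−1,t)Z − U(n,t)Z⁻¹ − (1/2)(U(n,t)U(n−1,t) + U(n−1,t)U(n,t))) Σ₃`. -/
def Vblk (Q P : ℤ → ℝ → Matrix (Fin N) (Fin N) ℂ) (n : ℤ) (t : ℝ) (z : ℂ) :
    Matrix (Fin N ⊕ Fin N) (Fin N ⊕ Fin N) ℂ :=
  Complex.I • ((Ublk Q P (n - 1) t * Zb N z - Ublk Q P n t * (Zb N z)⁻¹
    - (1 / 2 : ℂ) • (Ublk Q P n t * Ublk Q P (n - 1) t
      + Ublk Q P (n - 1) t * Ublk Q P n t)) * Sigma3b N)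

theorem Matrix.IsDiag.commute {n R : Type*} [Fintype n] [DecidableEq n] [CommSemiring R]
    {A B : Matrix n n R} (hA : A.IsDiag) (hB : B.IsDiag) : Commute A B := by
  rw [← hA.diagonal_diag, ← hB.diagonal_diag]
  exact commute_diagonal _ _

theorem Zb_mul_Zb_inv {z : ℂ} (hz : z ≠ 0) : Zb N z * Zb N z⁻¹ = 1 := by
  simp [Zb, fromBlocks_multiply, smul_smul, hz, fromBlocks_one]

theorem Zb_inv {z : ℂ} (hz : z ≠ 0) : (Zb N z)⁻¹ = Zb N z⁻¹ :=
  inv_eq_right_inv (Zb_mul_Zb_inv hz)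

theorem Zb_inv_mul_Zb {z : ℂ} (hz : z ≠ 0) : Zb N z⁻¹ * Zb N z = 1 := by
  simpa using Zb_mul_Zb_inv (N := N) (inv_ne_zero hz)

theorem Zb_add_mul_Zb_inv_sub {z : ℂ} (hz : z ≠ 0) (Q P : Matrix (Fin N) (Fin N) ℂ) :
    (Zb N z + fromBlocks 0 Q P 0) * (Zb N z⁻¹ - fromBlocks 0 Q P 0) =
      fromBlocks (1 - Q * P) 0 0 (1 - P * Q) := by
  simp only [Zb, inv_inv, sub_eq_add_neg, fromBlocks_neg, fromBlocks_add, fromBlocks_multiply]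
  congr 1 <;> simp [smul_smul, hz, add_comm]

theorem Fblk_mul_self {Q P Fd : ℤ → ℝ → Matrix (Fin N) (Fin N) ℂ} {n : ℤ} {t : ℝ}
    (hQP : Commute (Q n t) (P n t)) (hFsq : Fd n t ^ 2 = 1 - Q n t * P n t) :
    Fblk Fd n t * Fblk Fd n t = fromBlocks (1 - Q n t * P n t) 0 0 (1 - P n t * Q n t) := by
  rw [Fblk, fromBlocks_multiply, ← hQP.eq, ← sq, hFsq]
  simp

theorem Matrix.inv_mul_eq_of_mul_eq_mul_mul {n R : Type*} [Fintype n] [DecidableEq n]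
    [CommRing R] {A B F L L' Z Z' : Matrix n n R} (hA : IsUnit A) (hB : IsUnit B)
    (hF : IsUnit F) (hZ : Z' * Z = 1) (hL : L * L' = F * F) (h : F * A = L * B * Z') :
    A⁻¹ * F = Z * B⁻¹ * L' := by
  have hFA : F * (A * (Z * B⁻¹ * L')) = F * F :=
    calc F * (A * (Z * B⁻¹ * L')) = L * B * (Z' * Z) * B⁻¹ * L' := by
          simp only [← mul_assoc, h]
      _ = F * F := by
          rw [hZ, mul_one, mul_nonsing_inv_cancel_right _ _ ((isUnit_iff_isUnit_det B).mp hB), hL]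
  have hAX : A * (Z * B⁻¹ * L') = F := hF.mul_left_cancel hFA
  rw [← hAX, nonsing_inv_mul_cancel_left _ _ ((isUnit_iff_isUnit_det A).mp hA)]

theorem hasDerivAt_matrix_inv_apply {𝕜 m : Type*} [RCLike 𝕜] [Fintype m] [DecidableEq m]
    {f : ℝ → Matrix m m 𝕜} {f' : Matrix m m 𝕜} {t : ℝ} (hu : IsUnit (f t))
    (h : ∀ i j, HasDerivAt (fun s => f s i j) (f' i j) t) (i j : m) :
    HasDerivAt (fun s => (f s)⁻¹ i j) ((-((f t)⁻¹ * f' * (f t)⁻¹)) i j) t := by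
  -- Any normed-algebra structure will do: all of them induce the entrywise topology.
  let _ : NormedRing (Matrix m m 𝕜) := Matrix.linftyOpNormedRing
  let _ : NormedAlgebra ℝ (Matrix m m 𝕜) := Matrix.linftyOpNormedAlgebra
  let ofCLM : (m → m → 𝕜) →L[ℝ] Matrix m m 𝕜 :=
    (ofLinearEquiv ℝ).toLinearMap.toContinuousLinearMap
  let entryCLM : Matrix m m 𝕜 →L[ℝ] 𝕜 :=
    ((LinearMap.proj j).comp
      (LinearMap.proj (R := ℝ) (φ := fun _ : m => m → 𝕜) i)).toContinuousLinearMap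
  have hf : HasDerivAt f f' t :=
    ofCLM.hasFDerivAt.comp_hasDerivAt t
      (hasDerivAt_pi.2 fun i => hasDerivAt_pi.2 fun j => h i j)
  have hinv : HasDerivAt (fun s => Ring.inverse (f s)) (-((f t)⁻¹ * f' * (f t)⁻¹)) t := by
    have := (hasFDerivAt_ringInverse (𝕜 := ℝ) hu.unit).comp_hasDerivAt t hf
    simp only [coe_units_inv, IsUnit.unit_spec] at this
    exact this
  simp only [← nonsing_inv_eq_ringInverse] at hinv
  exact entryCLM.hasFDerivAt.comp_hasDerivAt t hinv

theorem Matrix.neg_inv_mul_lax_mul_inv {m R : Type*} [Fintype m] [DecidableEq m] [CommRing R]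
    {B : Matrix m m R} (hB : IsUnit B) (S V : Matrix m m R) (c : R) :
    -(B⁻¹ * (c • (S * B - B * S) + V * B) * B⁻¹) = c • (S * B⁻¹ - B⁻¹ * S) - B⁻¹ * V := by
  have hd := (isUnit_iff_isUnit_det B).mp hB
  simp only [mul_add, add_mul, mul_smul_comm, smul_mul_assoc, mul_sub, sub_mul, ← mul_assoc,
    nonsing_inv_mul _ hd, one_mul, mul_nonsing_inv_cancel_right _ _ hd]
  rw [neg_add, ← smul_neg, neg_sub, ← sub_eq_add_neg]

theorem stmt15_general (N : ℕ)
    (Q P Fd : ℤ → ℝ → Matrix (Fin N) (Fin N) ℂ)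
    (hQ : ∀ n t, (Q n t).IsDiag) (hP : ∀ n t, (P n t).IsDiag)
    (hFinv : ∀ n t, IsUnit (Fd n t))
    (hFsq : ∀ n t, (Fd n t) ^ 2 = 1 - Q n t * P n t)
    (μ : ℤ → ℝ → ℂ → Matrix (Fin N ⊕ Fin N) (Fin N ⊕ Fin N) ℂ)
    (hμinv : ∀ n t z, IsUnit (μ n t z))
    (hS : ∀ (n : ℤ) (t : ℝ) (z : ℂ), z ≠ 0 →
      Fblk Fd n t * μ (n + 1) t z =
        Zb N z * μ n t z * (Zb N z)⁻¹ + Ublk Q P n t * μ n t z * (Zb N z)⁻¹)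
    (hT : ∀ (n : ℤ) (z : ℂ), z ≠ 0 → ∀ (t : ℝ) (i j : Fin N ⊕ Fin N),
      HasDerivAt (fun s => μ n s z i j)
        (((Complex.I * omega z) • (Sigma3b N * μ n t z - μ n t z * Sigma3b N)
          + Vblk Q P n t z * μ n t z) i j) t) :
    ∀ (n : ℤ) (t : ℝ) (z : ℂ), z ≠ 0 →
      ((μ (n + 1) t z)⁻¹ * Fblk Fd n t =
        Zb N z * (μ n t z)⁻¹ * (Zb N z)⁻¹ - Zb N z * (μ n t z)⁻¹ * Ublk Q P n t) ∧
      (∀ i j : Fin N ⊕ Fin N,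
        HasDerivAt (fun s => (μ n s z)⁻¹ i j)
          (((Complex.I * omega z) • (Sigma3b N * (μ n t z)⁻¹ - (μ n t z)⁻¹ * Sigma3b N)
            - (μ n t z)⁻¹ * Vblk Q P n t z) i j) t) := by
  intro n t z hz
  have hF : IsUnit (Fblk Fd n t) := isUnit_fromBlocks_zero₂₁.mpr ⟨hFinv n t, hFinv n t⟩
  have hLL' : (Zb N z + Ublk Q P n t) * (Zb N z⁻¹ - Ublk Q P n t) =
      Fblk Fd n t * Fblk Fd n t := by
    rw [Fblk_mul_self ((hQ n t).commute (hP n t)) (hFsq n t), Ublk, Zb_add_mul_Zb_inv_sub hz]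
  have hspace : Fblk Fd n t * μ (n + 1) t z = (Zb N z + Ublk Q P n t) * μ n t z * Zb N z⁻¹ := by
    rw [hS n t z hz, Zb_inv hz, add_mul, add_mul]
  refine ⟨?_, fun i j => ?_⟩
  · rw [inv_mul_eq_of_mul_eq_mul_mul (hμinv _ _ _) (hμinv _ _ _) hF (Zb_inv_mul_Zb hz) hLL'
      hspace, mul_sub, Zb_inv hz]
  · rw [← neg_inv_mul_lax_mul_inv (hμinv n t z)]
    exact hasDerivAt_matrix_inv_apply (hμinv n t z) (hT n z hz t) i j

/-- Step of Lemma 3: the inverse `Φ = μ⁻¹` of an invertible solution of the Lax pair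
solves the adjoint Lax equations. -/
theorem stmt15 (N : ℕ) (hN : 0 < N)
    (Q P Fd : ℤ → ℝ → Matrix (Fin N) (Fin N) ℂ)
    (hQ : ∀ n t, (Q n t).IsDiag) (hP : ∀ n t, (P n t).IsDiag)
    (hFd : ∀ n t, (Fd n t).IsDiag)
    (hFinv : ∀ n t, IsUnit (Fd n t))
    (hFsq : ∀ n t, (Fd n t) ^ 2 = 1 - Q n t * P n t)
    (μ : ℤ → ℝ → ℂ → Matrix (Fin N ⊕ Fin N) (Fin N ⊕ Fin N) ℂ)
    (hμinv : ∀ n t z, IsUnit (μ n t z))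
    (hS : ∀ (n : ℤ) (t : ℝ) (z : ℂ), z ≠ 0 →
      Fblk Fd n t * μ (n + 1) t z =
        Zb N z * μ n t z * (Zb N z)⁻¹ + Ublk Q P n t * μ n t z * (Zb N z)⁻¹)
    (hT : ∀ (n : ℤ) (z : ℂ), z ≠ 0 → ∀ (t : ℝ) (i j : Fin N ⊕ Fin N),
      HasDerivAt (fun s => μ n s z i j)
        (((Complex.I * omega z) • (Sigma3b N * μ n t z - μ n t z * Sigma3b N)
          + Vblk Q P n t z * μ n t z) i j) t) :
    ∀ (n : ℤ) (t : ℝ) (z : ℂ), z ≠ 0 →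
      ((μ (n + 1) t z)⁻¹ * Fblk Fd n t =
        Zb N z * (μ n t z)⁻¹ * (Zb N z)⁻¹ - Zb N z * (μ n t z)⁻¹ * Ublk Q P n t) ∧
      (∀ i j : Fin N ⊕ Fin N,
        HasDerivAt (fun s => (μ n s z)⁻¹ i j)
          (((Complex.I * omega z) • (Sigma3b N * (μ n t z)⁻¹ - (μ n t z)⁻¹ * Sigma3b N)
            - (μ n t z)⁻¹ * Vblk Q P n t z) i j) t) :=
  stmt15_general N Q P Fd hQ hP hFinv hFsq μ hμinv hS hT

end
end

section
/- (Key cancellation in Proposition 5: time evolution of the defect contribution to the conserved quantities.) Let T₁, T₂ : ℝ → M₂(ℂ) with entries T_j^{kl}(t), and assume T₁^{22}(t) = −T₁^{11}(t) for all t. Let 𝒟 : ℝ → M₂(ℂ) be differentiable with 𝒟′(t) = T₂(t) 𝒟(t) − 𝒟(t) T₁(t). Let Ω¹ : ℝ → ℂ be differentiable and satisfy the Riccati equation (Ω¹)′(t) = T₁^{21}(t) − 2 T₁^{11}(t) Ω¹(t) − T₁^{12}(t) (Ω¹(t))². Set h(t) = 𝒟^{11}(t) + 𝒟^{12}(t)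 Ω¹(t), assume h(t) ≠ 0 for all t, and define Ω²(t) = (𝒟^{21}(t) + 𝒟^{22}(t) Ω¹(t)) / h(t). Then for all t ∈ ℝ: h′(t) = ( T₂^{11}(t) + T₂^{12}(t) Ω²(t) − T₁^{11}(t) − T₁^{12}(t) Ω¹(t) ) · h(t). -/
/-!
Differentiating `h = 𝒟¹¹ + 𝒟¹² Ω¹` gives `(𝒟′)¹¹ + (𝒟′)¹² Ω¹ + 𝒟¹² (Ω¹)′`. Expanding
`𝒟′ = T₂ 𝒟 − 𝒟 T₁` and the Riccati equation, the `T₁²¹` terms cancel, the `T₂` terms collect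
into `T₂¹¹ h + T₂¹² (𝒟²¹ + 𝒟²² Ω¹) = (T₂¹¹ + T₂¹² Ω²) h`, and the remaining `T₁` terms
collect into `−(T₁¹¹ + T₁¹² Ω¹) h` exactly because `T₁²² + 2 T₁¹¹ = T₁¹¹`.
-/

theorem mul_sub_mul_apply_zero_add_riccati {R : Type*} [CommRing R]
    (T₁ T₂ D : Matrix (Fin 2) (Fin 2) R) (hT₁ : T₁ 1 1 = -T₁ 0 0) (ω : R) :
    (T₂ * D - D * T₁) 0 0 + ((T₂ * D - D * T₁) 0 1 * ω
        + D 0 1 * (T₁ 1 0 - 2 * T₁ 0 0 * ω - T₁ 0 1 * ω ^ 2)) =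
      (T₂ 0 0 - T₁ 0 0 - T₁ 0 1 * ω) * (D 0 0 + D 0 1 * ω)
        + T₂ 0 1 * (D 1 0 + D 1 1 * ω) := by
  simp only [Matrix.sub_apply, Matrix.mul_apply, Fin.sum_univ_two, hT₁]
  ring

theorem hasDerivAt_apply_zero_zero_add_mul_of_riccati {𝕜 𝔸 : Type*}
    [NontriviallyNormedField 𝕜] [NormedCommRing 𝔸] [NormedAlgebra 𝕜 𝔸]
    {T₁ T₂ D : 𝕜 → Matrix (Fin 2) (Fin 2) 𝔸} {ω : 𝕜 → 𝔸} {t : 𝕜}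
    (hT₁ : T₁ t 1 1 = -T₁ t 0 0)
    (hD : ∀ i j : Fin 2, HasDerivAt (fun s => D s i j) ((T₂ t * D t - D t * T₁ t) i j) t)
    (hω : HasDerivAt ω (T₁ t 1 0 - 2 * T₁ t 0 0 * ω t - T₁ t 0 1 * ω t ^ 2) t) :
    HasDerivAt (fun s => D s 0 0 + D s 0 1 * ω s)
      ((T₂ t 0 0 - T₁ t 0 0 - T₁ t 0 1 * ω t) * (D t 0 0 + D t 0 1 * ω t)
        + T₂ t 0 1 * (D t 1 0 + D t 1 1 * ω t)) t := by
  rw [← mul_sub_mul_apply_zero_add_riccati _ _ _ hT₁]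
  exact (hD 0 0).add ((hD 0 1).fun_mul hω)

/-- Key cancellation in Proposition 5: if `𝒟′ = T₂ 𝒟 − 𝒟 T₁`, `Ω¹` solves the Riccati
equation `(Ω¹)′ = T₁²¹ − 2 T₁¹¹ Ω¹ − T₁¹² (Ω¹)²`, `T₁²² = −T₁¹¹`, and
`h = 𝒟¹¹ + 𝒟¹² Ω¹` is nowhere zero, then with
`Ω² = (𝒟²¹ + 𝒟²² Ω¹)/h` one has `h′ = (T₂¹¹ + T₂¹² Ω² − T₁¹¹ − T₁¹² Ω¹) h`. -/
theorem stmt19 (T₁ T₂ : ℝ → Matrix (Fin 2) (Fin 2) ℂ)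
    (htrace : ∀ t : ℝ, T₁ t 1 1 = -(T₁ t 0 0))
    (𝒟 : ℝ → Matrix (Fin 2) (Fin 2) ℂ)
    (h𝒟 : ∀ (t : ℝ) (i j : Fin 2),
      HasDerivAt (fun s => 𝒟 s i j) ((T₂ t * 𝒟 t - 𝒟 t * T₁ t) i j) t)
    (Ω₁ : ℝ → ℂ)
    (hΩ₁ : ∀ t : ℝ,
      HasDerivAt Ω₁ (T₁ t 1 0 - 2 * T₁ t 0 0 * Ω₁ t - T₁ t 0 1 * (Ω₁ t) ^ 2) t)
    (h : ℝ → ℂ)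
    (hdef : ∀ t : ℝ, h t = 𝒟 t 0 0 + 𝒟 t 0 1 * Ω₁ t)
    (hne : ∀ t : ℝ, h t ≠ 0)
    (Ω₂ : ℝ → ℂ)
    (hΩ₂ : ∀ t : ℝ, Ω₂ t = (𝒟 t 1 0 + 𝒟 t 1 1 * Ω₁ t) / h t) :
    ∀ t : ℝ,
      HasDerivAt h
        ((T₂ t 0 0 + T₂ t 0 1 * Ω₂ t - T₁ t 0 0 - T₁ t 0 1 * Ω₁ t) * h t) t := by
  intro t
  have hderiv := hasDerivAt_apply_zero_zero_add_mul_of_riccati (htrace t) (h𝒟 t) (hΩ₁ t)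
  have hΩ₂h : 𝒟 t 1 0 + 𝒟 t 1 1 * Ω₁ t = Ω₂ t * h t := by
    rw [hΩ₂, div_mul_cancel₀ _ (hne t)]
  rw [← funext hdef, ← hdef, hΩ₂h] at hderiv
  exact hderiv.congr_deriv (by ring)
end
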